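/- The dimension of the affine subspace of R^((mk)^n) cut out by the normalization and no-signaling conditions on n-partite conditional probability distributions with m settings and k outcomes per party is (1 + m(k-1))^n - 1. -/

import Mathlib

/-!
Splitting off the first party identifies the `(n + 1)`-party no-signaling subspace with the
families, indexed by the first party's outcome and setting, of `n`-party no-signaling vectors whose
outcome-marginal does not depend on the setting. Comparing the marginals with those at one fixed
setting (rank-nullity) shows that such families form a space of dimension `m (k - 1) + 1` times
that of the `n`-party space, so the linear no-signaling space has dimension `(1 + m (k - 1)) ^ n`.
On it the total mass `∑ₐ P (a | x)` does not depend on `x`, so the normalized points form a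
translate of the kernel of one nonzero functional, of dimension one less.
-/

open Finset Function Module

theorem finrank_inf_ker_add_one {K V : Type*} [Field K] [AddCommGroup V] [Module K V]
    [FiniteDimensional K V] {p : Submodule K V} {f : V →ₗ[K] K} {v : V} (hv : v ∈ p)
    (hfv : f v ≠ 0) : finrank K ↥(p ⊓ LinearMap.ker f) + 1 = finrank K p := by
  have hf : f.domRestrict p ≠ 0 := fun h => hfv (LinearMap.congr_fun h ⟨v, hv⟩)
  rw [← Module.Dual.finrank_ker_add_one_of_ne_zero hf, LinearMap.ker_domRestrict,
    ← Submodule.finrank_map_subtype_eq, Submodule.map_comap_subtype]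

section ConstMarginal

variable (K A X V : Type*) [Field K] [Fintype A] [AddCommGroup V] [Module K V]

def constMarginal : Submodule K (A × X → V) where
  carrier := {h | ∀ x x', ∑ a, h (a, x) = ∑ a, h (a, x')}
  add_mem' {h h'} hh hh' x x' := by simp only [Pi.add_apply, sum_add_distrib, hh x x', hh' x x']
  zero_mem' _ _ := by simp
  smul_mem' c h hh x x' := by simp only [Pi.smul_apply, ← smul_sum, hh x x']

variable {K A X V}

theorem mem_constMarginal {h : A × X → V} :
    h ∈ constMarginal K A X V ↔ ∀ x x', ∑ a, h (a, x) = ∑ a, h (a, x') := Iff.rfl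

def marginalDefect (x₀ : X) : (A × X → V) →ₗ[K] ({x // x ≠ x₀} → V) where
  toFun h x := ∑ a, h (a, x) - ∑ a, h (a, x₀)
  map_add' h h' := by ext; simp only [Pi.add_apply, sum_add_distrib]; abel
  map_smul' c h := by ext; simp only [Pi.smul_apply, ← smul_sum, smul_sub, RingHom.id_apply]

theorem ker_marginalDefect (x₀ : X) :
    LinearMap.ker (marginalDefect (K := K) (A := A) (V := V) x₀) = constMarginal K A X V := by
  ext h
  simp only [LinearMap.mem_ker, funext_iff, Subtype.forall]
  refine ⟨fun hh x x' => ?_, fun hh x _ => sub_eq_zero.2 (hh x x₀)⟩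
  have eq_at_x₀ (y : X) : ∑ a, h (a, y) = ∑ a, h (a, x₀) := by
    by_cases hy : y = x₀
    · rw [hy]
    · exact sub_eq_zero.1 (hh y hy)
  rw [eq_at_x₀ x, eq_at_x₀ x']

theorem marginalDefect_surjective [Nonempty A] (x₀ : X) :
    Surjective (marginalDefect (K := K) (A := A) (V := V) x₀) := by
  classical
  intro g
  obtain ⟨a₀⟩ := ‹Nonempty A›
  let g' : X → V := fun x => if hx : x = x₀ then 0 else g ⟨x, hx⟩
  refine ⟨fun p => if p.1 = a₀ then g' p.2 else 0, funext fun x => ?_⟩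
  simp [marginalDefect, g', x.2]

theorem finrank_constMarginal [Fintype X] [Nonempty A] [Nonempty X] [FiniteDimensional K V] :
    finrank K (constMarginal K A X V) =
      (Fintype.card X * (Fintype.card A - 1) + 1) * finrank K V := by
  classical
  obtain ⟨x₀⟩ := ‹Nonempty X›
  have h := LinearMap.finrank_range_add_finrank_ker (marginalDefect (K := K) (A := A) (V := V) x₀)
  rw [LinearMap.range_eq_top.2 (marginalDefect_surjective x₀), finrank_top, ker_marginalDefect,
    finrank_pi_fintype, finrank_pi_fintype] at h
  simp only [sum_const, card_univ, smul_eq_mul, Fintype.card_prod, Fintype.card_subtype_compl,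
    Fintype.card_unique] at h
  obtain ⟨a, ha⟩ := Nat.exists_eq_add_one.2 (Fintype.card_pos (α := A))
  obtain ⟨x, hx⟩ := Nat.exists_eq_add_one.2 (Fintype.card_pos (α := X))
  rw [ha, hx, Nat.add_sub_cancel] at h ⊢
  linarith

theorem constMarginal_inf_pi_eq_map (N : Submodule K V) :
    constMarginal K A X V ⊓ Submodule.pi Set.univ (fun _ => N) =
      (constMarginal K A X N).map (N.subtype.compLeft (A × X)) := by
  ext h
  constructor
  · rintro ⟨hh, hN⟩
    refine ⟨fun p => ⟨h p, hN p trivial⟩, fun x x' => Subtype.ext ?_, rfl⟩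
    simpa using hh x x'
  · rintro ⟨g, hg, rfl⟩
    exact ⟨fun x x' => by simpa using congrArg N.subtype (hg x x'), fun p _ => (g p).2⟩

theorem finrank_constMarginal_inf_pi [Fintype X] [Nonempty A] [Nonempty X]
    [FiniteDimensional K V] (N : Submodule K V) :
    finrank K ↥(constMarginal K A X V ⊓ Submodule.pi Set.univ (fun _ => N)) =
      (Fintype.card X * (Fintype.card A - 1) + 1) * finrank K N := by
  rw [constMarginal_inf_pi_eq_map, ← finrank_constMarginal,
    (Submodule.equivMapOfInjective (N.subtype.compLeft (A × X))
      N.injective_subtype.comp_left _).finrank_eq]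

end ConstMarginal

section NoSignaling

variable (K A X : Type*) [Field K]

def splitFirst (n : ℕ) :
    ((Fin (n + 1) → A) × (Fin (n + 1) → X) → K) ≃ₗ[K] (A × X → (Fin n → A) × (Fin n → X) → K) where
  toFun Q p q := Q (Fin.cons p.1 q.1, Fin.cons p.2 q.2)
  invFun h q := h (q.1 0, q.2 0) (Fin.tail q.1, Fin.tail q.2)
  left_inv Q := by simp [Fin.cons_self_tail]
  right_inv h := by simp
  map_add' _ _ := rfl
  map_smul' _ _ := rfl

variable {K A X}

@[simp]
theorem splitFirst_apply {n : ℕ} (Q : (Fin (n + 1) → A) × (Fin (n + 1) → X) → K) (p : A × X)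
    (q : (Fin n → A) × (Fin n → X)) :
    splitFirst K A X n Q p q = Q (Fin.cons p.1 q.1, Fin.cons p.2 q.2) := rfl

variable [Fintype A]

def NoSignalingAt {n : ℕ} (i : Fin n) (Q : (Fin n → A) × (Fin n → X) → K) : Prop :=
  ∀ a x x', (∀ j, j ≠ i → x j = x' j) → ∑ t, Q (update a i t, x) = ∑ t, Q (update a i t, x')

variable (K A X) in
def noSignaling (n : ℕ) : Submodule K ((Fin n → A) × (Fin n → X) → K) where
  carrier := {Q | ∀ i, NoSignalingAt i Q}
  add_mem' {Q Q'} hQ hQ' i a x x' hx := by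
    simp only [Pi.add_apply, sum_add_distrib, hQ i a x x' hx, hQ' i a x x' hx]
  zero_mem' _ _ _ _ _ := by simp
  smul_mem' c Q hQ i a x x' hx := by simp only [Pi.smul_apply, ← smul_sum, hQ i a x x' hx]

theorem noSignalingAt_zero_iff {n : ℕ} (Q : (Fin (n + 1) → A) × (Fin (n + 1) → X) → K) :
    NoSignalingAt 0 Q ↔ splitFirst K A X n Q ∈ constMarginal K A X _ := by
  simp only [NoSignalingAt, ne_eq, Fin.forall_fin_succ_pi, not_true_eq_false, IsEmpty.forall_iff,
    Fin.succ_ne_zero, not_false_eq_true, forall_const, Fin.cons_succ, Fin.update_cons_zero,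
    mem_constMarginal, funext_iff, Finset.sum_apply, splitFirst_apply, Prod.forall]
  refine ⟨fun h x x' a v => ?_,
    fun h _ a x v x' v' hv => by obtain rfl : v = v' := funext hv; exact h x x' a v⟩
  rcases isEmpty_or_nonempty A with hA | ⟨⟨c⟩⟩
  · simp
  · exact h c a x v x' v fun _ => rfl

theorem noSignalingAt_succ_iff {n : ℕ} (Q : (Fin (n + 1) → A) × (Fin (n + 1) → X) → K)
    (j : Fin n) : NoSignalingAt j.succ Q ↔ ∀ p, NoSignalingAt j (splitFirst K A X n Q p) := by
  simp only [NoSignalingAt, ne_eq, Fin.forall_fin_succ_pi, (Fin.succ_ne_zero j).symm,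
    not_false_eq_true, forall_const, Fin.succ_inj, Fin.cons_zero, Fin.cons_succ, ← Fin.cons_update,
    splitFirst_apply, Prod.forall]
  exact ⟨fun h a b a' x x' => h a a' b x b x' rfl,
    fun h a a' b x _ x' hb => hb ▸ h a b a' x x'⟩

theorem map_splitFirst_noSignaling (n : ℕ) :
    (noSignaling K A X (n + 1)).map (splitFirst K A X n : _ →ₗ[K] _) =
      constMarginal K A X _ ⊓ Submodule.pi Set.univ (fun _ => noSignaling K A X n) := by
  ext h
  obtain ⟨Q, rfl⟩ := (splitFirst K A X n).surjective h
  rw [Submodule.mem_map_equiv, LinearEquiv.symm_apply_apply, Submodule.mem_inf, Submodule.mem_pi]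
  change (∀ i, NoSignalingAt i Q) ↔ _ ∧ ∀ p ∈ Set.univ, ∀ j, NoSignalingAt j _
  simp only [Fin.forall_fin_succ, noSignalingAt_zero_iff, noSignalingAt_succ_iff, Set.mem_univ,
    true_implies]
  rw [forall_comm]

theorem finrank_noSignaling [Fintype X] [Nonempty A] [Nonempty X] (n : ℕ) :
    finrank K (noSignaling K A X n) = (Fintype.card X * (Fintype.card A - 1) + 1) ^ n := by
  induction n with
  | zero =>
    have : noSignaling K A X 0 = ⊤ := Submodule.eq_top_iff'.2 fun _ i => i.elim0
    rw [this, finrank_top, finrank_fintype_fun_eq_card]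
    simp
  | succ n ih =>
    rw [← LinearEquiv.finrank_map_eq (splitFirst K A X n), map_splitFirst_noSignaling,
      finrank_constMarginal_inf_pi, ih, pow_succ, mul_comm]

def totalMass {n : ℕ} (x : Fin n → X) : ((Fin n → A) × (Fin n → X) → K) →ₗ[K] K where
  toFun Q := ∑ a, Q (a, x)
  map_add' _ _ := sum_add_distrib
  map_smul' _ _ := by simp only [Pi.smul_apply, smul_sum, RingHom.id_apply]

@[simp]
theorem totalMass_apply {n : ℕ} (x : Fin n → X) (Q : (Fin n → A) × (Fin n → X) → K) :
    totalMass x Q = ∑ a, Q (a, x) := rfl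

theorem totalMass_cons {n : ℕ} (y : X) (x : Fin n → X)
    (Q : (Fin (n + 1) → A) × (Fin (n + 1) → X) → K) :
    totalMass (Fin.cons y x) Q = totalMass x (∑ t, splitFirst K A X n Q (t, y)) := by
  simp only [totalMass_apply, Finset.sum_apply, splitFirst_apply]
  rw [← (Fin.consEquiv fun _ => A).sum_comp, Fintype.sum_prod_type, sum_comm]
  rfl

theorem totalMass_eq_of_mem_noSignaling {n : ℕ} {Q : (Fin n → A) × (Fin n → X) → K}
    (hQ : Q ∈ noSignaling K A X n) (x x' : Fin n → X) : totalMass x Q = totalMass x' Q := by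
  induction n with
  | zero => rw [Subsingleton.elim x x']
  | succ n ih =>
    obtain ⟨hmarg, hpi⟩ :
        splitFirst K A X n Q ∈ constMarginal K A X _ ⊓ Submodule.pi Set.univ _ := by
      rw [← map_splitFirst_noSignaling]
      exact ⟨Q, hQ, rfl⟩
    have hmem : ∑ t, splitFirst K A X n Q (t, x 0) ∈ noSignaling K A X n :=
      Submodule.sum_mem _ fun t _ => (Submodule.mem_pi.1 hpi) (t, x 0) trivial
    rw [← Fin.cons_self_tail x, ← Fin.cons_self_tail x', totalMass_cons, totalMass_cons,
      ih hmem (Fin.tail x) (Fin.tail x'), hmarg (x 0) (x' 0)]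

theorem setOf_normalized_eq_mk' {n : ℕ} {P₀ : (Fin n → A) × (Fin n → X) → K}
    (hP₀ : P₀ ∈ noSignaling K A X n) (x₀ : Fin n → X) (hmass : totalMass x₀ P₀ = 1) :
    {P | (∀ x, ∑ a, P (a, x) = 1) ∧ P ∈ noSignaling K A X n} =
      AffineSubspace.mk' P₀ (noSignaling K A X n ⊓ LinearMap.ker (totalMass x₀)) := by
  ext P
  simp only [Set.mem_ofPred_eq, SetLike.mem_coe, AffineSubspace.mem_mk', vsub_eq_sub,
    Submodule.mem_inf, LinearMap.mem_ker, map_sub, hmass, sub_eq_zero,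
    Submodule.sub_mem_iff_left _ hP₀]
  refine ⟨fun ⟨hnorm, hP⟩ => ⟨hP, hnorm x₀⟩, fun ⟨hP, hnorm⟩ => ⟨fun x => ?_, hP⟩⟩
  rw [← totalMass_apply, totalMass_eq_of_mem_noSignaling hP x x₀, hnorm]

theorem finrank_direction_affineSpan_normalized [Fintype X] [Nonempty A] [Nonempty X] (n : ℕ) :
    finrank K (affineSpan K {P | (∀ x, ∑ a, P (a, x) = 1) ∧ P ∈ noSignaling K A X n}).direction =
      (Fintype.card X * (Fintype.card A - 1) + 1) ^ n - 1 := by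
  classical
  obtain ⟨a₀⟩ := ‹Nonempty A›
  obtain ⟨x₀⟩ := ‹Nonempty X›
  -- the deterministic point (every party answers `a₀`); the uniform one would need `|A| ≠ 0` in `K`
  let P₀ : (Fin n → A) × (Fin n → X) → K := fun q => if q.1 = fun _ => a₀ then 1 else 0
  have hP₀ : P₀ ∈ noSignaling K A X n := fun _ _ _ _ _ => rfl
  have hmass : totalMass (fun _ => x₀) P₀ = 1 := by simp [P₀]
  rw [setOf_normalized_eq_mk' hP₀ _ hmass, AffineSubspace.affineSpan_coe,
    AffineSubspace.direction_mk', ← finrank_noSignaling (K := K) n,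
    ← finrank_inf_ker_add_one hP₀ (hmass ▸ one_ne_zero), Nat.add_sub_cancel]

end NoSignaling

theorem stmt3_general (n m k : ℕ) (hm : 0 < m) (hk : 0 < k) :
    Module.finrank ℝ
      (affineSpan ℝ {P : ((Fin n → Fin k) × (Fin n → Fin m)) → ℝ |
        (∀ x : Fin n → Fin m, ∑ a : Fin n → Fin k, P (a, x) = 1) ∧
        (∀ i : Fin n, ∀ a : Fin n → Fin k, ∀ x x' : Fin n → Fin m,
          (∀ j, j ≠ i → x j = x' j) →
          ∑ t : Fin k, P (Function.update a i t, x) =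
            ∑ t : Fin k, P (Function.update a i t, x'))}).direction =
      (1 + m * (k - 1)) ^ n - 1 := by
  have : NeZero m := ⟨hm.ne'⟩
  have : NeZero k := ⟨hk.ne'⟩
  have h := finrank_direction_affineSpan_normalized (K := ℝ) (A := Fin k) (X := Fin m) n
  rw [Fintype.card_fin, Fintype.card_fin, add_comm] at h
  exact h

/-- The affine subspace of `ℝ^((mk)^n)` cut out by normalization and no-signaling for
`n`-partite conditional probability distributions with `m` settings and `k` outcomes
per party has dimension `(1 + m(k-1))^n - 1`. -/
theorem stmt3 (n m k : ℕ) (hn : 0 < n) (hm : 0 < m) (hk : 0 < k) :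
    Module.finrank ℝ
      (affineSpan ℝ {P : ((Fin n → Fin k) × (Fin n → Fin m)) → ℝ |
        (∀ x : Fin n → Fin m, ∑ a : Fin n → Fin k, P (a, x) = 1) ∧
        (∀ i : Fin n, ∀ a : Fin n → Fin k, ∀ x x' : Fin n → Fin m,
          (∀ j, j ≠ i → x j = x' j) →
          ∑ t : Fin k, P (Function.update a i t, x) =
            ∑ t : Fin k, P (Function.update a i t, x'))}).direction =
      (1 + m * (k - 1)) ^ n - 1 :=
  stmt3_general n m k hm hk
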